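/- Let n ≥ 2, Q ∈ Her⁺(ℂⁿ), and let L₁, L₂ ∈ ℙ(ℂⁿ) be two lines. Then L₁ ⊆ L₂^{⊥_Q} if and only if L₁ ≠ L₂ and σ_Q^{L₁} ⊆ Z_{SU(Q)}(σ_Q^{L₂}). -/

import Mathlib

open scoped ComplexOrder

/-- The special linear group `SL_n(ℂ)`, as the subspace of `n × n` complex matrices
of determinant `1`. -/
abbrev SL (n : ℕ) : Type := {A : Matrix (Fin n) (Fin n) ℂ // A.det = 1}

/-- The Hermitian form associated to a matrix `M`: `(u, v) ↦ conj(u)ᵀ M v`.  For `M = 1`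
this is the standard Hermitian form `Q₀((uᵢ),(vᵢ)) = Σᵢ conj(uᵢ)·vᵢ`. -/
noncomputable def form {n : ℕ} (M : Matrix (Fin n) (Fin n) ℂ) (u v : Fin n → ℂ) : ℂ :=
  dotProduct (star u) (M.mulVec v)

/-- The subgroup `SU(Q) ⊆ SL_n(ℂ)` of matrices preserving the Hermitian form of `M`.
For `M = 1` this is the special unitary group `SU_n`. -/
def SUQ {n : ℕ} (M : Matrix (Fin n) (Fin n) ℂ) : Set (SL n) :=
  {A | ∀ u v : Fin n → ℂ, form M (A.val.mulVec u) (A.val.mulVec v) = form M u v}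

/-- The center of `SL_n(ℂ)` (equal to the center of `SU_n`): scalar matrices `ζ • 1`
with `ζ` an `n`-th root of unity. -/
def centerSL (n : ℕ) : Set (SL n) :=
  {A | ∃ ζ : ℂ, ζ ^ n = 1 ∧ A.val = ζ • (1 : Matrix (Fin n) (Fin n) ℂ)}

/-- The `Q`-orthogonal complement of a subspace `W`, for the Hermitian form of `M`. -/
def perp {n : ℕ} (M : Matrix (Fin n) (Fin n) ℂ) (W : Submodule ℂ (Fin n → ℂ)) :
    Set (Fin n → ℂ) :=
  {u | ∀ v ∈ W, form M u v = 0}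

/-- The subgroup `σ_Q^L ⊆ SU(Q)` of elements acting as a scalar on the line `L` and as
a scalar on its `Q`-orthogonal complement `L^{⊥_Q}`. -/
def sigmaQ {n : ℕ} (M : Matrix (Fin n) (Fin n) ℂ) (L : Projectivization ℂ (Fin n → ℂ)) :
    Set (SL n) :=
  {A | A ∈ SUQ M ∧ ∃ a b : ℂ, (∀ v ∈ L.submodule, A.val.mulVec v = a • v) ∧
    (∀ u ∈ perp M L.submodule, A.val.mulVec u = b • u)}

/-- The space `Her⁺(ℂⁿ)` of positive definite Hermitian forms on `ℂⁿ`, realized as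
positive definite Hermitian `n × n` matrices with the subspace topology. -/
abbrev HerPos (n : ℕ) : Type := {M : Matrix (Fin n) (Fin n) ℂ // M.PosDef}

/-- A map `SL_n(ℂ) → SU_n` preserves commutativity if it sends commuting pairs of
matrices to commuting pairs. -/
def PreservesComm {n : ℕ} (φ : SL n → ↥(SUQ (1 : Matrix (Fin n) (Fin n) ℂ))) : Prop :=
  ∀ A B : SL n, A.val * B.val = B.val * A.val →
    (φ A).val.val * (φ B).val.val = (φ B).val.val * (φ A).val.val

/-- `φ(Z(SL_n(ℂ))) = Z(SU_n)`: the image of the center of `SL_n(ℂ)` is exactly the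
center of `SU_n`. -/
def MapsCenterOnto {n : ℕ} (φ : SL n → ↥(SUQ (1 : Matrix (Fin n) (Fin n) ℂ))) : Prop :=
  φ '' centerSL n = {B : ↥(SUQ (1 : Matrix (Fin n) (Fin n) ℂ)) | B.val ∈ centerSL n}

/-!
An element of `σ_Q^L` acting by `a` on `L = ℂ x` and by `b` on `L^⊥` is the matrix
`b • 1 + (a - b) • P_x`, where `P_x v = (Q(x,v) / Q(x,x)) x` is the `Q`-orthogonal projection
onto `L`. So if `a ≠ b`, two such elements commute iff `P_{x₁}` and `P_{x₂}` commute.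
If `Q(x₁,x₂) = 0`, both products `P_{x₁} P_{x₂}` and `P_{x₂} P_{x₁}` vanish. Conversely, if they
commute, `P_{x₂} x₁` is fixed by `P_{x₁}`, hence lies in `ℂ x₁`; being a multiple of
`x₂ ∉ ℂ x₁`, it vanishes, i.e. `Q(x₂,x₁) = 0`. Elements with `a ≠ b` exist in every `σ_Q^L`:
take `a = -b` with `bⁿ = -1`.
-/

open Matrix Submodule

theorem Commute.smul_one_add_smul {R A : Type*} [CommSemiring R] [Semiring A] [Algebra R A]
    {P Q : A} (h : Commute P Q) (b₁ c₁ b₂ c₂ : R) :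
    Commute (b₁ • 1 + c₁ • P) (b₂ • 1 + c₂ • Q) := by
  have scalar : ∀ (b : R) (X : A), Commute (b • 1) X := fun b X => (Commute.one_left X).smul_left b
  exact (scalar _ _).add_left (((scalar _ _).symm.add_right (h.smul_right _)).smul_left _)

theorem commute_smul_one_add_smul_iff {K A : Type*} [Field K] [Ring A] [Algebra K A]
    {P Q : A} {b₁ c₁ b₂ c₂ : K} (hc₁ : c₁ ≠ 0) (hc₂ : c₂ ≠ 0) :
    Commute (b₁ • 1 + c₁ • P) (b₂ • 1 + c₂ • Q) ↔ Commute P Q := by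
  refine ⟨fun h => ?_, fun h => h.smul_one_add_smul _ _ _ _⟩
  have solve : ∀ (b c : K) (X : A), c ≠ 0 → X = (-b / c) • 1 + c⁻¹ • (b • 1 + c • X) :=
    fun b c X hc => by
      rw [smul_add, smul_smul, inv_smul_smul₀ hc, ← add_assoc, ← add_smul, neg_div, div_eq_inv_mul,
        neg_add_cancel, zero_smul, zero_add]
  rw [solve b₁ c₁ P hc₁, solve b₂ c₂ Q hc₂]
  exact h.smul_one_add_smul _ _ _ _

theorem Matrix.det_smul_one_add_vecMulVec {K m : Type*} [Field K] [Fintype m] [DecidableEq m]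
    {b : K} (hb : b ≠ 0) (u w : m → K) :
    det (b • 1 + vecMulVec u w) = b ^ Fintype.card m * (1 + b⁻¹ * (w ⬝ᵥ u)) := by
  have : b • (1 : Matrix m m K) + vecMulVec u w = b • (1 + vecMulVec (b⁻¹ • u) w) := by
    rw [smul_add, smul_vecMulVec, smul_smul, mul_inv_cancel₀ hb, one_smul]
  rw [this, det_smul, vecMulVec_eq Unit, det_one_add_replicateCol_mul_replicateRow,
    dotProduct_smul, smul_eq_mul]

theorem Projectivization.eq_of_rep_mem_submodule {K V : Type*} [DivisionRing K] [AddCommGroup V]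
    [Module K V] {L L' : Projectivization K V} (h : L'.rep ∈ L.submodule) : L' = L := by
  rw [submodule_eq, mem_span_singleton] at h
  obtain ⟨a, ha⟩ := h
  rw [← L.mk_rep, ← L'.mk_rep, mk_eq_mk_iff']
  exact ⟨a, ha⟩

section HermitianForm

variable {n : ℕ} {M : Matrix (Fin n) (Fin n) ℂ}

theorem form_add_left (u v w : Fin n → ℂ) : form M (u + v) w = form M u w + form M v w := by
  simp [form, add_dotProduct]

theorem form_add_right (u v w : Fin n → ℂ) : form M u (v + w) = form M u v + form M u w := by
  simp [form, mulVec_add]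

theorem form_sub_right (u v w : Fin n → ℂ) : form M u (v - w) = form M u v - form M u w := by
  simp [form, mulVec_sub]

theorem form_smul_left (c : ℂ) (u v : Fin n → ℂ) : form M (c • u) v = star c * form M u v := by
  simp [form, smul_dotProduct]

theorem form_smul_right (c : ℂ) (u v : Fin n → ℂ) : form M u (c • v) = c * form M u v := by
  simp [form, mulVec_smul]

theorem star_form (hM : M.IsHermitian) (u v : Fin n → ℂ) : star (form M u v) = form M v u := by
  rw [form, star_dotProduct, star_star, star_mulVec, hM.eq, ← dotProduct_mulVec]
  rfl

theorem form_self_ne_zero (hM : M.PosDef) {x : Fin n → ℂ} (hx : x ≠ 0) : form M x x ≠ 0 :=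
  (hM.dotProduct_mulVec_pos hx).ne'

theorem mem_perp_span_singleton_iff (hM : M.IsHermitian) {x u : Fin n → ℂ} :
    u ∈ perp M (ℂ ∙ x) ↔ form M x u = 0 := by
  refine ⟨fun h => ?_, fun h v hv => ?_⟩
  · rw [← star_form hM, h x (mem_span_singleton_self x), star_zero]
  · obtain ⟨c, rfl⟩ := mem_span_singleton.1 hv
    rw [form_smul_right, ← star_form hM, h, star_zero, mul_zero]

theorem span_singleton_subset_perp_iff (hM : M.IsHermitian) {x y : Fin n → ℂ} :
    ((ℂ ∙ x : Submodule ℂ (Fin n → ℂ)) : Set (Fin n → ℂ)) ⊆ perp M (ℂ ∙ y) ↔ form M x y = 0 := by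
  refine ⟨fun h => h (mem_span_singleton_self x) y (mem_span_singleton_self y), fun h u hu => ?_⟩
  obtain ⟨c, rfl⟩ := mem_span_singleton.1 hu
  rw [mem_perp_span_singleton_iff hM, form_smul_right, ← star_form hM, h, star_zero, mul_zero]

theorem smul_mem_perp {W : Submodule ℂ (Fin n → ℂ)} {w : Fin n → ℂ} (hw : w ∈ perp M W) (c : ℂ) :
    c • w ∈ perp M W := fun z hz => by
  rw [form_smul_left, hw z hz, mul_zero]

theorem form_add_add_of_mem_perp (hM : M.IsHermitian) {x p p' r r' : Fin n → ℂ}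
    (hp : p ∈ ℂ ∙ x) (hp' : p' ∈ ℂ ∙ x) (hr : r ∈ perp M (ℂ ∙ x)) (hr' : r' ∈ perp M (ℂ ∙ x)) :
    form M (p + r) (p' + r') = form M p p' + form M r r' := by
  have hpr' : form M p r' = 0 := by rw [← star_form hM, hr' p hp, star_zero]
  rw [form_add_left, form_add_right, form_add_right, hpr', hr p' hp']
  ring

end HermitianForm

section LineProjection

variable {n : ℕ} {M : Matrix (Fin n) (Fin n) ℂ}

noncomputable def lineProj (M : Matrix (Fin n) (Fin n) ℂ) (x : Fin n → ℂ) :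
    Matrix (Fin n) (Fin n) ℂ :=
  vecMulVec ((form M x x)⁻¹ • x) (star x ᵥ* M)

theorem lineProj_mulVec (x v : Fin n → ℂ) :
    lineProj M x *ᵥ v = (form M x v / form M x x) • x := by
  rw [lineProj, vecMulVec_mulVec, ← dotProduct_mulVec, op_smul_eq_smul, smul_smul, div_eq_mul_inv]
  rfl

theorem lineProj_mulVec_mem (x v : Fin n → ℂ) : lineProj M x *ᵥ v ∈ ℂ ∙ x := by
  rw [lineProj_mulVec]
  exact smul_mem _ _ (mem_span_singleton_self x)

theorem lineProj_mulVec_of_mem (hM : M.PosDef) {x v : Fin n → ℂ} (hx : x ≠ 0) (hv : v ∈ ℂ ∙ x) :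
    lineProj M x *ᵥ v = v := by
  obtain ⟨c, rfl⟩ := mem_span_singleton.1 hv
  rw [lineProj_mulVec, form_smul_right, mul_div_assoc, div_self (form_self_ne_zero hM hx), mul_one]

theorem lineProj_mulVec_of_mem_perp (hM : M.IsHermitian) {x u : Fin n → ℂ}
    (hu : u ∈ perp M (ℂ ∙ x)) : lineProj M x *ᵥ u = 0 := by
  rw [lineProj_mulVec, (mem_perp_span_singleton_iff hM).1 hu, zero_div, zero_smul]

theorem sub_lineProj_mulVec_mem_perp (hM : M.PosDef) {x : Fin n → ℂ} (hx : x ≠ 0)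
    (v : Fin n → ℂ) : v - lineProj M x *ᵥ v ∈ perp M (ℂ ∙ x) := by
  rw [mem_perp_span_singleton_iff hM.isHermitian, lineProj_mulVec, form_sub_right,
    form_smul_right, div_mul_cancel₀ _ (form_self_ne_zero hM hx), sub_self]

theorem exists_add_mem_perp (hM : M.PosDef) {x : Fin n → ℂ} (hx : x ≠ 0) (v : Fin n → ℂ) :
    ∃ p ∈ ℂ ∙ x, ∃ r ∈ perp M (ℂ ∙ x), v = p + r :=
  ⟨_, lineProj_mulVec_mem x v, _, sub_lineProj_mulVec_mem_perp hM hx v, (add_sub_cancel _ _).symm⟩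

theorem lineProj_mul_lineProj_of_form_eq_zero {x y : Fin n → ℂ} (h : form M x y = 0) :
    lineProj M x * lineProj M y = 0 := by
  refine ext_iff_mulVec.2 fun v => ?_
  rw [← mulVec_mulVec, lineProj_mulVec, lineProj_mulVec y, form_smul_right, h, mul_zero,
    zero_div, zero_smul, zero_mulVec]

theorem commute_lineProj_of_form_eq_zero (hM : M.IsHermitian) {x y : Fin n → ℂ}
    (h : form M x y = 0) : Commute (lineProj M x) (lineProj M y) :=
  (lineProj_mul_lineProj_of_form_eq_zero h).trans
    (lineProj_mul_lineProj_of_form_eq_zero (by rw [← star_form hM, h, star_zero])).symm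

theorem form_eq_zero_of_commute_lineProj (hM : M.PosDef) {x y : Fin n → ℂ} (hx : x ≠ 0)
    (h : Commute (lineProj M x) (lineProj M y)) (hy : y ∉ ℂ ∙ x) : form M x y = 0 := by
  have hy0 : y ≠ 0 := by rintro rfl; exact hy (zero_mem _)
  have key : lineProj M y *ᵥ x ∈ ℂ ∙ x := by
    have hfix : lineProj M y *ᵥ x = lineProj M x *ᵥ (lineProj M y *ᵥ x) := by
      rw [mulVec_mulVec, h.eq, ← mulVec_mulVec,
        lineProj_mulVec_of_mem hM hx (mem_span_singleton_self x)]
    rw [hfix]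
    exact lineProj_mulVec_mem _ _
  rw [lineProj_mulVec] at key
  have hcoeff : form M y x / form M y y = 0 := by
    by_contra hc
    exact hy ((smul_mem_iff _ hc).1 key)
  rw [div_eq_zero_iff, or_iff_left (form_self_ne_zero hM hy0)] at hcoeff
  rw [← star_form hM.isHermitian, hcoeff, star_zero]

end LineProjection

section Sigma

variable {n : ℕ} {M : Matrix (Fin n) (Fin n) ℂ}

theorem smul_one_add_smul_lineProj_mulVec_of_mem (hM : M.PosDef) {x v : Fin n → ℂ} (hx : x ≠ 0)
    (hv : v ∈ ℂ ∙ x) (a b : ℂ) : (b • 1 + (a - b) • lineProj M x) *ᵥ v = a • v := by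
  rw [add_mulVec, smul_mulVec, smul_mulVec, one_mulVec, lineProj_mulVec_of_mem hM hx hv, ← add_smul,
    add_sub_cancel]

theorem smul_one_add_smul_lineProj_mulVec_of_mem_perp (hM : M.IsHermitian) {x u : Fin n → ℂ}
    (hu : u ∈ perp M (ℂ ∙ x)) (b c : ℂ) : (b • 1 + c • lineProj M x) *ᵥ u = b • u := by
  rw [add_mulVec, smul_mulVec, smul_mulVec, one_mulVec, lineProj_mulVec_of_mem_perp hM hu,
    smul_zero, add_zero]

theorem eq_smul_one_add_smul_lineProj (hM : M.PosDef) {x : Fin n → ℂ} (hx : x ≠ 0)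
    {A : Matrix (Fin n) (Fin n) ℂ} {a b : ℂ} (ha : ∀ v ∈ ℂ ∙ x, A *ᵥ v = a • v)
    (hb : ∀ u ∈ perp M (ℂ ∙ x), A *ᵥ u = b • u) :
    A = b • 1 + (a - b) • lineProj M x := by
  refine ext_iff_mulVec.2 fun v => ?_
  obtain ⟨p, hp, r, hr, rfl⟩ := exists_add_mem_perp hM hx v
  rw [mulVec_add, mulVec_add, ha p hp, hb r hr,
    smul_one_add_smul_lineProj_mulVec_of_mem hM hx hp,
    smul_one_add_smul_lineProj_mulVec_of_mem_perp hM.isHermitian hr]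

theorem form_mulVec_mulVec_of_unitary_eigen (hM : M.PosDef) {x : Fin n → ℂ} (hx : x ≠ 0)
    {A : Matrix (Fin n) (Fin n) ℂ} {a b : ℂ} (ha : ∀ v ∈ ℂ ∙ x, A *ᵥ v = a • v)
    (hb : ∀ u ∈ perp M (ℂ ∙ x), A *ᵥ u = b • u) (ha₁ : star a * a = 1) (hb₁ : star b * b = 1)
    (u v : Fin n → ℂ) : form M (A *ᵥ u) (A *ᵥ v) = form M u v := by
  obtain ⟨p, hp, r, hr, rfl⟩ := exists_add_mem_perp hM hx u
  obtain ⟨p', hp', r', hr', rfl⟩ := exists_add_mem_perp hM hx v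
  rw [mulVec_add, mulVec_add, ha p hp, ha p' hp', hb r hr, hb r' hr',
    form_add_add_of_mem_perp hM.isHermitian (smul_mem _ a hp) (smul_mem _ a hp')
      (smul_mem_perp hr b) (smul_mem_perp hr' b),
    form_add_add_of_mem_perp hM.isHermitian hp hp' hr hr', form_smul_left, form_smul_right,
    form_smul_left, form_smul_right, ← mul_assoc, ha₁, ← mul_assoc, hb₁, one_mul, one_mul]

theorem det_smul_one_add_smul_lineProj (hM : M.PosDef) {x : Fin n → ℂ} (hx : x ≠ 0) {b : ℂ}
    (hb : b ≠ 0) (c : ℂ) : det (b • 1 + c • lineProj M x) = b ^ n * (1 + b⁻¹ * c) := by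
  rw [lineProj, ← smul_vecMulVec, det_smul_one_add_vecMulVec hb, Fintype.card_fin, smul_smul,
    dotProduct_smul, ← dotProduct_mulVec, smul_eq_mul, mul_assoc, ← form,
    inv_mul_cancel₀ (form_self_ne_zero hM hx), mul_one]

theorem exists_eq_of_mem_sigmaQ (hM : M.PosDef) {L : Projectivization ℂ (Fin n → ℂ)} {A : SL n}
    (hA : A ∈ sigmaQ M L) : ∃ b c : ℂ, A.val = b • 1 + c • lineProj M L.rep := by
  obtain ⟨-, a, b, ha, hb⟩ := hA
  rw [L.submodule_eq] at ha hb
  exact ⟨b, a - b, eq_smul_one_add_smul_lineProj hM L.rep_nonzero ha hb⟩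

theorem exists_mem_sigmaQ (hM : M.PosDef) (L : Projectivization ℂ (Fin n → ℂ)) :
    ∃ A ∈ sigmaQ M L, ∃ b c : ℂ, c ≠ 0 ∧ A.val = b • 1 + c • lineProj M L.rep := by
  have hx := L.rep_nonzero
  have hn : n ≠ 0 := by
    rintro rfl
    exact hx (Subsingleton.elim _ _)
  obtain ⟨b, hb⟩ := IsAlgClosed.exists_pow_nat_eq (-1 : ℂ) (Nat.pos_of_ne_zero hn)
  have hb_norm : ‖b‖ = 1 := by
    rw [← pow_eq_one_iff_of_nonneg (norm_nonneg b) hn, ← norm_pow, hb, norm_neg, norm_one]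
  have hb0 : b ≠ 0 := norm_ne_zero_iff.1 (by rw [hb_norm]; exact one_ne_zero)
  have star_mul_of_norm_eq_one : ∀ z : ℂ, ‖z‖ = 1 → star z * z = 1 := fun z hz => by
    rw [Complex.star_def, Complex.conj_mul', hz]
    norm_num
  -- `bⁿ = -1` is what makes `det A = bⁿ (1 + b⁻¹ (-b - b)) = 1`.
  set A := b • 1 + (-b - b) • lineProj M L.rep
  have hdet : A.det = 1 := by
    rw [det_smul_one_add_smul_lineProj hM hx hb0, hb]
    field_simp
    ring
  have ha : ∀ v ∈ ℂ ∙ L.rep, A *ᵥ v = (-b) • v := fun v hv =>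
    smul_one_add_smul_lineProj_mulVec_of_mem hM hx hv _ _
  have hb : ∀ u ∈ perp M (ℂ ∙ L.rep), A *ᵥ u = b • u := fun u hu =>
    smul_one_add_smul_lineProj_mulVec_of_mem_perp hM.isHermitian hu _ _
  refine ⟨⟨A, hdet⟩, ⟨form_mulVec_mulVec_of_unitary_eigen hM hx ha hb ?_ ?_, -b, b, ?_⟩, b,
    -b - b, ?_, rfl⟩
  · exact star_mul_of_norm_eq_one _ (by rw [norm_neg, hb_norm])
  · exact star_mul_of_norm_eq_one _ hb_norm
  · rw [L.submodule_eq]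
    exact ⟨ha, hb⟩
  · rw [← neg_add', neg_ne_zero, ← two_mul]
    exact mul_ne_zero two_ne_zero hb0

end Sigma

theorem orthogonal_iff_sigma_commutes_general (n : ℕ) (Q : HerPos n)
    (L₁ L₂ : Projectivization ℂ (Fin n → ℂ)) :
    (L₁.submodule : Set (Fin n → ℂ)) ⊆ perp Q.val L₂.submodule ↔
      (L₁ ≠ L₂ ∧ ∀ A ∈ sigmaQ Q.val L₁, A ∈ SUQ Q.val ∧
        ∀ B ∈ sigmaQ Q.val L₂, A.val * B.val = B.val * A.val) := by
  obtain ⟨M, hM⟩ := Q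
  rw [L₁.submodule_eq, L₂.submodule_eq, span_singleton_subset_perp_iff hM.isHermitian]
  constructor
  · intro h
    refine ⟨?_, fun A hA => ⟨hA.1, fun B hB => ?_⟩⟩
    · rintro rfl
      exact form_self_ne_zero hM L₁.rep_nonzero h
    obtain ⟨b₁, c₁, hA_eq⟩ := exists_eq_of_mem_sigmaQ hM hA
    obtain ⟨b₂, c₂, hB_eq⟩ := exists_eq_of_mem_sigmaQ hM hB
    rw [hA_eq, hB_eq]
    exact (commute_lineProj_of_form_eq_zero hM.isHermitian h).smul_one_add_smul _ _ _ _
  · rintro ⟨hne, hcomm⟩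
    obtain ⟨A, hA, b₁, c₁, hc₁, hA_eq⟩ := exists_mem_sigmaQ hM L₁
    obtain ⟨B, hB, b₂, c₂, hc₂, hB_eq⟩ := exists_mem_sigmaQ hM L₂
    have hAB : Commute A.val B.val := (hcomm A hA).2 B hB
    rw [hA_eq, hB_eq, commute_smul_one_add_smul_iff hc₁ hc₂] at hAB
    refine form_eq_zero_of_commute_lineProj hM L₁.rep_nonzero hAB fun h => hne ?_
    rw [← L₁.submodule_eq] at h
    exact (Projectivization.eq_of_rep_mem_submodule h).symm

/-- two lines `L₁, L₂` satisfy `L₁ ⊆ L₂^{⊥_Q}` if and only if `L₁ ≠ L₂`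
and `σ_Q^{L₁} ⊆ Z_{SU(Q)}(σ_Q^{L₂})`. -/
theorem orthogonal_iff_sigma_commutes (n : ℕ) (hn : 2 ≤ n) (Q : HerPos n)
    (L₁ L₂ : Projectivization ℂ (Fin n → ℂ)) :
    (L₁.submodule : Set (Fin n → ℂ)) ⊆ perp Q.val L₂.submodule ↔
      (L₁ ≠ L₂ ∧ ∀ A ∈ sigmaQ Q.val L₁, A ∈ SUQ Q.val ∧
        ∀ B ∈ sigmaQ Q.val L₂, A.val * B.val = B.val * A.val) :=
  orthogonal_iff_sigma_commutes_general n Q L₁ L₂
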